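/- For β > 0, 0 < K ≤ K_c(β) = (e^β + 2)/(4β) and 0 < β ≤ log 4, the point x = 0 is a global minimum of G_{β,K}(x) = βKx² − c_β(2βKx), i.e. G_{β,K}(x) ≥ G_{β,K}(0) = 0 for all x ∈ ℝ. -/

import Mathlib

noncomputable def cgf (β t : ℝ) : ℝ :=
  Real.log ((1 + Real.exp (-β) * (Real.exp t + Real.exp (-t))) / (1 + 2 * Real.exp (-β)))

noncomputable def G (β K x : ℝ) : ℝ := β * K * x ^ 2 - cgf β (2 * β * K * x)

open Real

/-- helper: generic monotone-on-Ici-0 lemma from a HasDerivAt with nonneg derivative -/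
lemma mono_aux {f f' : ℝ → ℝ} (hd : ∀ x, HasDerivAt f (f' x) x)
    (h0 : ∀ x, 0 ≤ x → 0 ≤ f' x) : MonotoneOn f (Set.Ici (0:ℝ)) := by
  apply monotoneOn_of_deriv_nonneg (convex_Ici 0)
  · exact fun x _ => (hd x).continuousAt.continuousWithinAt
  · exact fun x _ => (hd x).differentiableAt.differentiableWithinAt
  · intro x hx
    rw [(hd x).deriv]
    rw [interior_Ici] at hx
    exact h0 x (le_of_lt hx)

lemma aux1 {t : ℝ} (ht : 0 ≤ t) : Real.sinh t ≤ t * Real.cosh t := by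
  have hd : ∀ x : ℝ, HasDerivAt (fun s => s * Real.cosh s - Real.sinh s) (x * Real.sinh x) x := by
    intro x
    have := ((hasDerivAt_id x).mul (Real.hasDerivAt_cosh x)).sub (Real.hasDerivAt_sinh x)
    refine this.congr_deriv ?_
    simp only [id_eq, one_mul]
    ring
  have := mono_aux hd (fun x hx => mul_nonneg hx (Real.sinh_nonneg_iff.2 hx)) (Set.self_mem_Ici)
    (Set.mem_Ici.2 ht) ht
  simpa using this

lemma aux2 {t : ℝ} (ht : 0 ≤ t) : 0 ≤ 2 - 2 * Real.cosh t + t * Real.sinh t := by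
  have hd : ∀ x : ℝ, HasDerivAt (fun s => 2 - 2 * Real.cosh s + s * Real.sinh s)
      (x * Real.cosh x - Real.sinh x) x := by
    intro x
    have := ((hasDerivAt_const x (2:ℝ)).sub ((Real.hasDerivAt_cosh x).const_mul 2)).add
      ((hasDerivAt_id x).mul (Real.hasDerivAt_sinh x))
    refine this.congr_deriv ?_
    simp only [id_eq, one_mul]
    ring
  have := mono_aux hd (fun x hx => sub_nonneg.2 (aux1 hx)) (Set.self_mem_Ici)
    (Set.mem_Ici.2 ht) ht
  simpa using this

lemma aux3 {t : ℝ} (ht : 0 ≤ t) : 3 * Real.sinh t ≤ 2 * t + t * Real.cosh t := by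
  have hd : ∀ x : ℝ, HasDerivAt (fun s => 2 * s + s * Real.cosh s - 3 * Real.sinh s)
      (2 - 2 * Real.cosh x + x * Real.sinh x) x := by
    intro x
    have := (((hasDerivAt_id x).const_mul 2).add
      ((hasDerivAt_id x).mul (Real.hasDerivAt_cosh x))).sub ((Real.hasDerivAt_sinh x).const_mul 3)
    refine this.congr_deriv ?_
    simp only [id_eq, one_mul]
    ring
  have := mono_aux hd (fun x hx => aux2 hx) (Set.self_mem_Ici) (Set.mem_Ici.2 ht) ht
  simp at this
  linarith

lemma key_ineq {a : ℝ} (ha : 1/3 ≤ a) (t : ℝ) :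
    Real.log (1 + a * (Real.cosh t - 1)) ≤ a / 2 * t ^ 2 := by
  have ha0 : 0 < a := by linarith
  have hD : ∀ s : ℝ, (0:ℝ) < 1 + a * (Real.cosh s - 1) := by
    intro s
    have := Real.one_le_cosh s
    nlinarith
  -- reduce to t ≥ 0 by evenness
  suffices h : ∀ t : ℝ, 0 ≤ t → Real.log (1 + a * (Real.cosh t - 1)) ≤ a / 2 * t ^ 2 by
    rcases le_or_gt 0 t with ht | ht
    · exact h t ht
    · have := h (-t) (by linarith)
      simpa [Real.cosh_neg] using this
  intro t ht
  set F : ℝ → ℝ := fun s => a / 2 * s ^ 2 - Real.log (1 + a * (Real.cosh s - 1)) with hF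
  have hd : ∀ x : ℝ, HasDerivAt F
      (a / 2 * (2 * x) - a * Real.sinh x / (1 + a * (Real.cosh x - 1))) x := by
    intro x
    have h1 : HasDerivAt (fun s : ℝ => 1 + a * (Real.cosh s - 1)) (a * Real.sinh x) x := by
      have := (((Real.hasDerivAt_cosh x).sub (hasDerivAt_const x (1:ℝ))).const_mul a).const_add 1
      simpa using this
    have h2 := h1.log (ne_of_gt (hD x))
    have h3 : HasDerivAt (fun s : ℝ => a / 2 * s ^ 2) (a / 2 * (2 * x)) x := by
      simpa using ((hasDerivAt_pow 2 x).const_mul (a/2))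
    exact h3.sub h2
  have hderiv_nonneg : ∀ x : ℝ, 0 ≤ x →
      0 ≤ a / 2 * (2 * x) - a * Real.sinh x / (1 + a * (Real.cosh x - 1)) := by
    intro x hx
    rw [sub_nonneg, div_le_iff₀ (hD x)]
    have h3 := aux3 hx
    have hc : 0 ≤ x * (Real.cosh x - 1) := by
      have := Real.one_le_cosh x
      nlinarith
    have : x + (1/3) * (x * (Real.cosh x - 1)) - Real.sinh x ≥ 0 := by nlinarith
    have haux : x + a * (x * (Real.cosh x - 1)) - Real.sinh x ≥ 0 := by nlinarith
    nlinarith [Real.one_le_cosh x]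
  have hmono := mono_aux hd hderiv_nonneg (Set.self_mem_Ici) (Set.mem_Ici.2 ht) ht
  have hF0 : F 0 = 0 := by simp [hF]
  rw [hF0] at hmono
  simp only [hF] at hmono
  linarith

lemma cgf_eq (β t : ℝ) :
    cgf β t = Real.log (1 + 2 / (Real.exp β + 2) * (Real.cosh t - 1)) := by
  unfold cgf
  congr 1
  have he : 0 < Real.exp β := Real.exp_pos β
  have he' : 0 < Real.exp (-β) := Real.exp_pos (-β)
  have hinv : Real.exp (-β) = 1 / Real.exp β := by
    rw [Real.exp_neg]; exact inv_eq_one_div _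
  rw [Real.cosh_eq, hinv]
  field_simp
  ring

theorem stmt_19 (β K : ℝ) (hβ : 0 < β) (hβc : β ≤ Real.log 4)
    (hK : 0 < K) (hKc : K ≤ (Real.exp β + 2) / (4 * β)) :
    G β K 0 = 0 ∧ ∀ x : ℝ, G β K 0 ≤ G β K x := by
  have he : 0 < Real.exp β := Real.exp_pos β
  have hG0 : G β K 0 = 0 := by
    simp [G, cgf_eq]
  refine ⟨hG0, fun x => ?_⟩
  rw [hG0]
  set a := 2 / (Real.exp β + 2) with ha_def
  have he4 : Real.exp β ≤ 4 := by
    calc Real.exp β ≤ Real.exp (Real.log 4) := Real.exp_le_exp.2 hβc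
    _ = 4 := Real.exp_log (by norm_num)
  have ha : 1/3 ≤ a := by
    rw [ha_def, le_div_iff₀ (by linarith)]
    linarith
  have hkey := key_ineq ha (2 * β * K * x)
  rw [G, cgf_eq]
  have haK : 2 * a * β * K ≤ 1 := by
    rw [ha_def]
    rw [le_div_iff₀ (by positivity)] at hKc
    have h4 : (2:ℝ) * (2 / (Real.exp β + 2)) * β * K = 4 * β * K / (Real.exp β + 2) := by ring
    rw [h4, div_le_one (by linarith)]
    linarith
  have hx2 : (0:ℝ) ≤ β * K * x ^ 2 := by positivity
  have : a / 2 * (2 * β * K * x) ^ 2 = (2 * a * β * K) * (β * K * x ^ 2) := by ring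
  rw [this] at hkey
  nlinarith
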